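/- Let θ ∈ (0, π/2) and define g : ℝ → ℝ by g(u) = (cos(u·tan θ) − cos θ)·sec²θ for |u| ≤ θ·cot θ and g(u) = 0 otherwise. Let w = g ∗ g be the convolution, w(u) = ∫_{−∞}^{∞} g(τ)·g(u − τ) dτ. Then w(0) = (θ·tan θ + 3θ·cot θ − 3)·sec²θ. -/

import Mathlib

/-!
Since `g` is even and supported on `[-a, a]` with `a = θ cot θ`, `w 0 = ∫_{-a}^{a} g²`. The square
`(cos (u tan θ) - cos θ)²` has an elementary antiderivative, and `a tan θ = θ` turns its values at
`±a` into trigonometric functions of `θ` alone.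
-/

open Real MeasureTheory

theorem integral_mul_comp_neg_of_even_truncation {a : ℝ} (ha : 0 ≤ a) {h g : ℝ → ℝ}
    (h_even : Function.Even h) (hg : ∀ u, g u = if |u| ≤ a then h u else 0) :
    ∫ τ, g τ * g (0 - τ) = ∫ τ in -a..a, h τ ^ 2 := by
  have h_sq : (fun τ => g τ * g (0 - τ)) = (Set.Icc (-a) a).indicator (fun τ => h τ ^ 2) := by
    funext τ
    simp only [hg, zero_sub, abs_neg, h_even τ, Set.indicator_apply, Set.mem_Icc, ← abs_le]
    split_ifs <;> ring
  rw [h_sq, integral_indicator measurableSet_Icc, integral_Icc_eq_integral_Ioc,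
    intervalIntegral.integral_of_le (by linarith)]

theorem hasDerivAt_antideriv_cos_mul_sub_sq {k : ℝ} (hk : k ≠ 0) (c x : ℝ) :
    HasDerivAt
      (fun x => x / 2 + sin (x * k) * cos (x * k) / (2 * k) - 2 * c * sin (x * k) / k + c ^ 2 * x)
      ((cos (x * k) - c) ^ 2) x := by
  have h_lin : HasDerivAt (fun x : ℝ => x * k) k x := by
    simpa using (hasDerivAt_id x).mul_const k
  have h_sin := (hasDerivAt_sin (x * k)).comp x h_lin
  have h_cos := (hasDerivAt_cos (x * k)).comp x h_lin
  have h_sum := (((hasDerivAt_id x).div_const 2).add ((h_sin.mul h_cos).div_const (2 * k))).sub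
    ((h_sin.const_mul (2 * c)).div_const k) |>.add ((hasDerivAt_id x).const_mul (c ^ 2))
  refine h_sum.congr_deriv ?_
  simp only [Function.comp_def]
  field_simp
  linear_combination -sin_sq_add_cos_sq (x * k)

theorem integral_cos_mul_sub_sq {k : ℝ} (hk : k ≠ 0) (c a : ℝ) :
    ∫ x in -a..a, (cos (x * k) - c) ^ 2
      = a + sin (a * k) * cos (a * k) / k - 4 * c * sin (a * k) / k + 2 * c ^ 2 * a := by
  rw [intervalIntegral.integral_eq_sub_of_hasDerivAt
    (fun x _ => hasDerivAt_antideriv_cos_mul_sub_sq hk c x)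
    (by apply Continuous.intervalIntegrable; fun_prop)]
  simp only [neg_mul, sin_neg, cos_neg]
  ring

/-- The value of the convolution `w = g ∗ g` at `0`, where
`g(u) = (cos(u tan θ) - cos θ) sec²θ` for `|u| ≤ θ cot θ` and `g(u) = 0` otherwise:
`w(0) = (θ tan θ + 3θ cot θ - 3) sec²θ`. -/
theorem convolution_at_zero (θ : ℝ) (hθ : θ ∈ Set.Ioo 0 (Real.pi / 2))
    (g : ℝ → ℝ)
    (hg : ∀ u : ℝ, g u =
      if |u| ≤ θ * (Real.cos θ / Real.sin θ) then
        (Real.cos (u * Real.tan θ) - Real.cos θ) / Real.cos θ ^ 2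
      else 0)
    (w : ℝ → ℝ) (hw : ∀ u : ℝ, w u = ∫ τ : ℝ, g τ * g (u - τ)) :
    w 0 = (θ * Real.tan θ + 3 * θ * (Real.cos θ / Real.sin θ) - 3) / Real.cos θ ^ 2 := by
  obtain ⟨hθ_pos, hθ_lt⟩ := hθ
  have hc : 0 < cos θ := cos_pos_of_mem_Ioo ⟨by linarith [pi_pos], hθ_lt⟩
  have hs : 0 < sin θ := sin_pos_of_pos_of_lt_pi hθ_pos (by linarith)
  have ht : tan θ ≠ 0 := by rw [tan_eq_sin_div_cos]; positivity
  have h_even : Function.Even fun u => (cos (u * tan θ) - cos θ) / cos θ ^ 2 := fun u => by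
    simp only [neg_mul, cos_neg]
  have h_end : θ * (cos θ / sin θ) * tan θ = θ := by
    rw [tan_eq_sin_div_cos]; field_simp
  rw [hw, integral_mul_comp_neg_of_even_truncation (by positivity) h_even hg]
  simp only [div_pow]
  rw [intervalIntegral.integral_div, integral_cos_mul_sub_sq ht, h_end, tan_eq_sin_div_cos]
  field_simp
  linear_combination -θ * sin_sq_add_cos_sq θ
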